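/- (Lemma 1, domain adaptation bound.) Let X be a measurable space, D_S (source) and D_T (target) probability measures on X, f : X → Bool a measurable labeling function, and H a nonempty set of measurable functions X → Bool. Then for every h ∈ H and every h* ∈ H, ε_{D_T}(h,f) ≤ ε_{D_T}(h*,f) + ε_{D_T}(h,h*) ≤ ε_{D_S}(h,f) + λ + (1/2) · d_{H∆H}(D_S,D_T), where λ := ε_{D_T}(h*,f) + ε_{D_S}(h*,f). In particular this holds when h* is an optimal hypothesis minimizing the combined source and target risk over H. -/
import Mathlib


open MeasureTheory

/-- The risk (disagreement probability) of hypothesis `h` w.r.t. `h'` under domain `D`. -/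
noncomputable def risk {X : Type*} [MeasurableSpace X] (D : Measure X) (h h' : X → Bool) : ℝ :=
  (D {x | h x ≠ h' x}).toReal

/-- The `H∆H`-divergence of two domains `D`, `D'` w.r.t. a hypothesis set `H`:
`2 · sup_{h,h' ∈ H} |ε_D(h,h') − ε_{D'}(h,h')|`. -/
noncomputable def dHH {X : Type*} [MeasurableSpace X]
    (H : Set (X → Bool)) (D D' : Measure X) : ℝ :=
  2 * sSup {r : ℝ | ∃ h ∈ H, ∃ h' ∈ H, r = |risk D h h' - risk D' h h'|}

lemma risk_nonneg {X : Type*} [MeasurableSpace X] (D : Measure X) (h h' : X → Bool) :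
    0 ≤ risk D h h' := ENNReal.toReal_nonneg

lemma risk_le_one {X : Type*} [MeasurableSpace X] (D : Measure X) [IsProbabilityMeasure D]
    (h h' : X → Bool) : risk D h h' ≤ 1 := by
  have := prob_le_one (μ := D) (s := {x | h x ≠ h' x})
  simpa [risk] using ENNReal.toReal_le_of_le_ofReal zero_le_one (by simpa using this)

lemma risk_comm {X : Type*} [MeasurableSpace X] (D : Measure X) (h h' : X → Bool) :
    risk D h h' = risk D h' h := by
  have : {x | h x ≠ h' x} = {x | h' x ≠ h x} := by ext x; exact ne_comm
  unfold risk
  rw [this]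

lemma risk_triangle {X : Type*} [MeasurableSpace X] (D : Measure X) [IsProbabilityMeasure D]
    (a b c : X → Bool) : risk D a c ≤ risk D a b + risk D b c := by
  unfold risk
  rw [← ENNReal.toReal_add (measure_ne_top _ _) (measure_ne_top _ _)]
  refine ENNReal.toReal_mono (by simp [ENNReal.add_ne_top, measure_ne_top]) ?_
  refine le_trans (measure_mono ?_) (measure_union_le _ _)
  intro x hx
  by_cases hab : a x = b x
  · right; simpa [Set.mem_setOf_eq, hab] using hx
  · left; exact hab

/-- Lemma 1 (domain adaptation bound): for every `h, h* ∈ H`,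
`ε_T(h,f) ≤ ε_T(h*,f) + ε_T(h,h*) ≤ ε_S(h,f) + λ + (1/2) d_{H∆H}(D_S, D_T)`
where `λ = ε_T(h*,f) + ε_S(h*,f)`. -/
theorem domain_adaptation_bound
    {X : Type*} [MeasurableSpace X] (DS DT : Measure X)
    [IsProbabilityMeasure DS] [IsProbabilityMeasure DT]
    (f : X → Bool) (hf : Measurable f)
    (H : Set (X → Bool)) (hne : H.Nonempty) (hmeas : ∀ g ∈ H, Measurable g)
    (h hstar : X → Bool) (hh : h ∈ H) (hhstar : hstar ∈ H) :
    risk DT h f ≤ risk DT hstar f + risk DT h hstar ∧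
      risk DT hstar f + risk DT h hstar ≤
        risk DS h f + (risk DT hstar f + risk DS hstar f) + (1 / 2) * dHH H DS DT := by
  constructor
  · calc risk DT h f ≤ risk DT h hstar + risk DT hstar f := risk_triangle DT h hstar f
      _ = risk DT hstar f + risk DT h hstar := by ring
  · have hbdd : BddAbove {r : ℝ | ∃ a ∈ H, ∃ b ∈ H, r = |risk DS a b - risk DT a b|} := by
      refine ⟨1, ?_⟩
      rintro r ⟨a, _, b, _, rfl⟩
      rw [abs_sub_le_iff]
      constructor
      · linarith [risk_le_one DS a b, risk_nonneg DT a b]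
      · linarith [risk_le_one DT a b, risk_nonneg DS a b]
    have hmem : |risk DS h hstar - risk DT h hstar| ∈
        {r : ℝ | ∃ a ∈ H, ∃ b ∈ H, r = |risk DS a b - risk DT a b|} :=
      ⟨h, hh, hstar, hhstar, rfl⟩
    have hsup := le_csSup hbdd hmem
    have h1 : risk DT h hstar ≤ risk DS h hstar + (1 / 2) * dHH H DS DT := by
      have h2 : risk DT h hstar - risk DS h hstar ≤ |risk DS h hstar - risk DT h hstar| := by
        rw [abs_sub_comm]; exact le_abs_self _
      unfold dHH
      linarith [le_trans h2 hsup]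
    have h3 : risk DS h hstar ≤ risk DS h f + risk DS hstar f := by
      have := risk_triangle DS h f hstar
      rw [risk_comm DS f hstar] at this
      exact this
    linarith
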